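/- arXiv:2210.02267 — 3 statements merged into one kernel-verified Lean document; each statement's English description precedes it below -/
import Mathlib

section
/- For a connected finite graph K, the sum of local degrees of a harmonic morphism f : G → K over the fiber of any point (vertex or half-edge) of K is independent of that point. -/
/-- A finite graph: vertices, half-edges with a root map and a fixed-point-free
involution pairing half-edges into edges. -/
structure HGraph where
  V : Type
  H : Type
  decV : DecidableEq V
  decH : DecidableEq H
  finV : Fintype V
  finH : Fintype H
  root : H → V
  inv : H → H
  inv_inv : ∀ h, inv (inv h) = h
  inv_ne : ∀ h, inv h ≠ h

attribute [instance] HGraph.decV HGraph.decH HGraph.finV HGraph.finH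

/-- A (finite) morphism of graphs. -/
structure GraphHom (G K : HGraph) where
  fV : G.V → K.V
  fH : G.H → K.H
  root_comm : ∀ h, fV (G.root h) = K.root (fH h)
  inv_comm : ∀ h, fH (G.inv h) = K.inv (fH h)

/-- A harmonic morphism of graphs: a graph morphism together with a positive local degree
function satisfying the harmonicity (balancing) condition at every vertex. -/
structure Harmonic (G K : HGraph) extends GraphHom G K where
  dV : G.V → ℕ
  dH : G.H → ℕ
  dV_pos : ∀ v, 0 < dV v
  dH_pos : ∀ h, 0 < dH h
  dH_inv : ∀ h, dH (G.inv h) = dH h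
  harm : ∀ (v : G.V) (h' : K.H), K.root h' = fV v →
    dV v = ∑ h ∈ Finset.univ.filter (fun h => G.root h = v ∧ fH h = h'), dH h

/-- The sum of local degrees over the fiber of a point (vertex or half-edge) of `K`. -/
def fiberDeg {G K : HGraph} (f : Harmonic G K) : K.V ⊕ K.H → ℕ
  | Sum.inl v => ∑ w ∈ Finset.univ.filter (fun w => f.fV w = v), f.dV w
  | Sum.inr h => ∑ x ∈ Finset.univ.filter (fun x => f.fH x = h), f.dH x

/-- Two vertices are adjacent if some edge connects them. -/
def HGraph.Adj (G : HGraph) (u v : G.V) : Prop :=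
  ∃ h, G.root h = u ∧ G.root (G.inv h) = v

/-- A graph is connected if any two vertices are joined by a walk. -/
def HGraph.Connected (G : HGraph) : Prop :=
  ∀ u v : G.V, Relation.ReflTransGen G.Adj u v

/-- The number of edges of a graph (each edge consists of two half-edges). -/
def numEdges (G : HGraph) : ℕ := Fintype.card G.H / 2

/-- The genus (first Betti number) `|E| - |V| + 1` of a connected graph. -/
def genus (G : HGraph) : ℤ := (numEdges G : ℤ) - (Fintype.card G.V : ℤ) + 1

/-- A harmonic morphism is a double cover if it has global degree two over every point. -/
def IsDoubleCover {G K : HGraph} (f : Harmonic G K) : Prop :=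
  ∀ x : K.V ⊕ K.H, fiberDeg f x = 2

/-- A tree is a connected graph of genus zero. -/
def IsTree (K : HGraph) : Prop := K.Connected ∧ genus K = 0

/-!
Summing the harmonicity condition over the vertices of the fiber above `K.root h'` shows
that the fiber degree of a half-edge `h'` equals that of its root vertex. Since `f` commutes
with the involutions and `d_f` is invariant under them, the two half-edges of an edge have
the same fiber degree, so the fiber degrees of adjacent vertices agree; connectedness of `K`
spreads this to all vertices, hence to all points.
-/

section FiberDegree

variable {G K : HGraph} (f : Harmonic G K)

lemma fiberDeg_inr_eq_root (h' : K.H) :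
    fiberDeg f (Sum.inr h') = fiberDeg f (Sum.inl (K.root h')) := by
  simp only [fiberDeg]
  rw [← Finset.sum_fiberwise_of_maps_to (g := G.root)
    (t := Finset.univ.filter (fun w => f.fV w = K.root h'))]
  · refine Finset.sum_congr rfl fun w hw => ?_
    rw [Finset.mem_filter] at hw
    rw [f.harm w h' hw.2.symm, Finset.filter_filter]
    simp only [and_comm]
  · intro h hh
    simp only [Finset.mem_filter, Finset.mem_univ, true_and] at hh ⊢
    rw [f.root_comm, hh]

lemma fiberDeg_inr_inv (h' : K.H) :
    fiberDeg f (Sum.inr (K.inv h')) = fiberDeg f (Sum.inr h') := by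
  simp only [fiberDeg]
  refine Finset.sum_nbij' G.inv G.inv ?_ ?_ (fun a _ => G.inv_inv a) (fun a _ => G.inv_inv a)
    (fun a _ => (f.dH_inv a).symm)
  · intro a ha
    simp only [Finset.mem_filter, Finset.mem_univ, true_and] at ha ⊢
    rw [f.inv_comm, ha, K.inv_inv]
  · intro a ha
    simp only [Finset.mem_filter, Finset.mem_univ, true_and] at ha ⊢
    rw [f.inv_comm, ha]

lemma fiberDeg_inl_eq_of_adj {u v : K.V} (huv : K.Adj u v) :
    fiberDeg f (Sum.inl u) = fiberDeg f (Sum.inl v) := by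
  obtain ⟨h, rfl, rfl⟩ := huv
  rw [← fiberDeg_inr_eq_root, ← fiberDeg_inr_eq_root, fiberDeg_inr_inv]

lemma fiberDeg_inl_eq_of_connected (hK : K.Connected) (u v : K.V) :
    fiberDeg f (Sum.inl u) = fiberDeg f (Sum.inl v) := by
  induction hK u v with
  | refl => rfl
  | tail _ hadj ih => exact ih.trans (fiberDeg_inl_eq_of_adj f hadj)

lemma exists_fiberDeg_eq_inl (x : K.V ⊕ K.H) : ∃ v, fiberDeg f x = fiberDeg f (Sum.inl v) := by
  cases x with
  | inl v => exact ⟨v, rfl⟩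
  | inr h => exact ⟨K.root h, fiberDeg_inr_eq_root f h⟩

end FiberDegree

/-- For a connected finite graph `K`, the sum of local degrees of a harmonic morphism
`f : G → K` over the fiber of any point (vertex or half-edge) of `K` is independent of
that point. -/
theorem stmt7 (G K : HGraph) (f : Harmonic G K) (hK : K.Connected)
    (x y : K.V ⊕ K.H) : fiberDeg f x = fiberDeg f y := by
  obtain ⟨u, hu⟩ := exists_fiberDeg_eq_inl f x
  obtain ⟨v, hv⟩ := exists_fiberDeg_eq_inl f y
  rw [hu, hv, fiberDeg_inl_eq_of_connected f hK u v]
end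

section
/- Every isogeny of integral tori factors as a free isogeny followed by a dilation, and this factorization is unique up to a unique isomorphism of the middle torus. -/
/-- A real torus with integral structure (integral torus): a pair `Λ, Λ'` of finitely
generated free abelian groups of the same rank together with a nondegenerate pairing
`[·,·] : Λ × Λ' → ℝ`.  The underlying torus is `Hom(Λ, ℝ)/Λ'`. -/
structure IntegralTorus where
  Λ : Type
  Λ' : Type
  grp : AddCommGroup Λ
  grp' : AddCommGroup Λ'
  fr : Module.Free ℤ Λ
  fr' : Module.Free ℤ Λ'
  fin : Module.Finite ℤ Λ
  fin' : Module.Finite ℤ Λ'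
  pair : Λ →ₗ[ℤ] Λ' →ₗ[ℤ] ℝ
  rank_eq : Module.finrank ℤ Λ = Module.finrank ℤ Λ'
  nondeg : ∀ l : Λ, l ≠ 0 → ∃ l', pair l l' ≠ 0
  nondeg' : ∀ l' : Λ', l' ≠ 0 → ∃ l, pair l l' ≠ 0

attribute [instance] IntegralTorus.grp IntegralTorus.grp'
attribute [instance] IntegralTorus.fr IntegralTorus.fr'
attribute [instance] IntegralTorus.fin IntegralTorus.fin'

/-- A homomorphism of integral tori `(f^#, f_#)`, with `f^# : Λ₂ → Λ₁` and
`f_# : Λ'₁ → Λ'₂`, compatible with the pairings. -/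
structure TorusHom (T₁ T₂ : IntegralTorus) where
  sharp : T₂.Λ →ₗ[ℤ] T₁.Λ
  flat : T₁.Λ' →ₗ[ℤ] T₂.Λ'
  compat : ∀ (a : T₂.Λ) (b : T₁.Λ'), T₁.pair (sharp a) b = T₂.pair a (flat b)

/-- Composition of homomorphisms of integral tori. -/
def TorusHom.comp {T₁ T₂ T₃ : IntegralTorus} (g : TorusHom T₂ T₃) (f : TorusHom T₁ T₂) :
    TorusHom T₁ T₃ where
  sharp := f.sharp.comp g.sharp
  flat := g.flat.comp f.flat
  compat := by
    intro a b
    simp only [LinearMap.comp_apply]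
    rw [f.compat, g.compat]

/-- An isogeny of integral tori: both `f^#` and `f_#` are injective with finite
cokernel. -/
def IsIsogeny {T₁ T₂ : IntegralTorus} (f : TorusHom T₁ T₂) : Prop :=
  Function.Injective f.sharp ∧ Function.Injective f.flat ∧
    Finite (T₁.Λ ⧸ LinearMap.range f.sharp) ∧ Finite (T₂.Λ' ⧸ LinearMap.range f.flat)

/-- A free isogeny: an isogeny whose `f^#` is an isomorphism. -/
def IsFreeIsogeny {T₁ T₂ : IntegralTorus} (f : TorusHom T₁ T₂) : Prop :=
  IsIsogeny f ∧ Function.Bijective f.sharp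

/-- A dilation: an isogeny whose `f_#` is an isomorphism. -/
def IsDilation {T₁ T₂ : IntegralTorus} (f : TorusHom T₁ T₂) : Prop :=
  IsIsogeny f ∧ Function.Bijective f.flat

/-- An isomorphism of integral tori: both components are bijective. -/
def IsTorusIso {T₁ T₂ : IntegralTorus} (f : TorusHom T₁ T₂) : Prop :=
  Function.Bijective f.sharp ∧ Function.Bijective f.flat

/-!
An isogeny `f` factors through the torus `T₃ = (Λ₁, Λ'₂)` whose pairing is the unique extension
of `[·,·]₁ : Λ₁ × Λ'₁ → ℝ` along `f_# : Λ'₁ ↪ Λ'₂`. The extension exists because real-valued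
functionals form a divisible, hence injective, abelian group; it is unique because `Λ'₂ / f_#Λ'₁`
is finite and `ℝ` is torsion-free. In Smith-normal-form bases it is
`[λ, f_i]₃ = (1/a_i)[λ, e_i]₁`.
Given another factorization `f = g' ∘ h'` through `P`, the same uniqueness shows that
`[c, b]_P = [h'^# c, g'_# b]₃`, so `(h'^#⁻¹, g'_#)` is a morphism `P → T₃`, and it is the only
one compatible with both factorizations.
-/

section FiniteCokernel

variable {M N : Type*} [AddCommGroup M] [AddCommGroup N]

@[reducible]
noncomputable def divisibleByIntOfModule (K V : Type*) [Field K] [CharZero K] [AddCommGroup V]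
    [Module K V] : DivisibleBy V ℤ where
  div v n := (n : K)⁻¹ • v
  div_zero v := by simp
  div_cancel v hn := by
    rw [← Int.cast_smul_eq_zsmul K, smul_smul, mul_inv_cancel₀ (Int.cast_ne_zero.2 hn), one_smul]

theorem LinearMap.exists_comp_eq_of_injective (K : Type*) {V : Type*} [Field K] [CharZero K]
    [AddCommGroup V] [Module K V] (φ : M →ₗ[ℤ] N) (hφ : Function.Injective φ) (B : M →ₗ[ℤ] V) :
    ∃ E : N →ₗ[ℤ] V, E ∘ₗ φ = B :=
  letI := divisibleByIntOfModule K V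
  (Module.Baer.of_divisible V).extension_property φ hφ B

theorem LinearMap.exists_nsmul_eq_of_finite_quotient (φ : M →ₗ[ℤ] N)
    [hφ : Finite (N ⧸ LinearMap.range φ)] (x : N) : ∃ n : ℕ, n ≠ 0 ∧ ∃ m, φ m = n • x :=
  ⟨_, AddSubgroup.index_ne_zero_of_finite (hH := hφ),
    (LinearMap.range φ).toAddSubgroup.nsmul_index_mem x⟩

theorem LinearMap.ext_of_comp_eq_of_finite_quotient {V : Type*} [AddCommGroup V]
    [IsAddTorsionFree V] (φ : M →ₗ[ℤ] N) [Finite (N ⧸ LinearMap.range φ)]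
    {E E' : N →ₗ[ℤ] V} (h : E ∘ₗ φ = E' ∘ₗ φ) : E = E' := by
  ext x
  obtain ⟨n, hn, m, hm⟩ := φ.exists_nsmul_eq_of_finite_quotient x
  apply nsmul_right_injective hn
  simp only [← map_nsmul, ← hm, ← LinearMap.comp_apply, h]

theorem LinearMap.finrank_eq_of_finite_quotient [Module.Free ℤ N] [Module.Finite ℤ N]
    {φ : M →ₗ[ℤ] N} (hφ : Function.Injective φ) [Finite (N ⧸ LinearMap.range φ)] :
    Module.finrank ℤ M = Module.finrank ℤ N := by
  rw [← LinearMap.finrank_range_of_inj hφ]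
  exact (Submodule.finiteQuotient_iff _).1 inferInstance

theorem finite_quotient_range_id : Finite (M ⧸ LinearMap.range (LinearMap.id : M →ₗ[ℤ] M)) := by
  rw [LinearMap.range_id]
  infer_instance

end FiniteCokernel

namespace TorusHom

variable {T₁ T₂ : IntegralTorus}

theorem ext {f g : TorusHom T₁ T₂} (hsharp : f.sharp = g.sharp) (hflat : f.flat = g.flat) :
    f = g := by
  cases f; cases g; simp_all

variable (f : TorusHom T₁ T₂)

/-- The pairing `[·,·]₃ : Λ₁ × Λ'₂ → ℝ` of the middle torus. -/
noncomputable def midPairing (hf : Function.Injective f.flat) : T₁.Λ →ₗ[ℤ] T₂.Λ' →ₗ[ℤ] ℝ :=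
  (Classical.choose (f.flat.exists_comp_eq_of_injective ℝ hf T₁.pair.flip)).flip

theorem midPairing_flat (hf : Function.Injective f.flat) (l : T₁.Λ) (b : T₁.Λ') :
    f.midPairing hf l (f.flat b) = T₁.pair l b :=
  LinearMap.congr_fun₂
    (Classical.choose_spec (f.flat.exists_comp_eq_of_injective ℝ hf T₁.pair.flip)) b l

theorem midPairing_eq_of_comp_eq [Finite (T₂.Λ' ⧸ LinearMap.range f.flat)]
    (hf : Function.Injective f.flat) {l : T₁.Λ} {χ : T₂.Λ' →ₗ[ℤ] ℝ}
    (hχ : ∀ b, χ (f.flat b) = T₁.pair l b) : f.midPairing hf l = χ :=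
  f.flat.ext_of_comp_eq_of_finite_quotient <| LinearMap.ext fun b => by
    simp only [LinearMap.comp_apply, midPairing_flat, hχ]

theorem midPairing_sharp [Finite (T₂.Λ' ⧸ LinearMap.range f.flat)]
    (hf : Function.Injective f.flat) (a : T₂.Λ) (b : T₂.Λ') :
    f.midPairing hf (f.sharp a) b = T₂.pair a b :=
  LinearMap.congr_fun (f.midPairing_eq_of_comp_eq hf fun b => (f.compat a b).symm) b

noncomputable def midTorus (hf : IsIsogeny f) : IntegralTorus where
  Λ := T₁.Λ
  Λ' := T₂.Λ'
  grp := T₁.grp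
  grp' := T₂.grp'
  fr := T₁.fr
  fr' := T₂.fr'
  fin := T₁.fin
  fin' := T₂.fin'
  pair := f.midPairing hf.2.1
  rank_eq := by
    have := hf.2.2.2
    rw [T₁.rank_eq, LinearMap.finrank_eq_of_finite_quotient hf.2.1]
  nondeg l hl := by
    obtain ⟨b, hb⟩ := T₁.nondeg l hl
    exact ⟨f.flat b, by rwa [midPairing_flat]⟩
  nondeg' b hb := by
    have := hf.2.2.2
    obtain ⟨n, hn, d, hd⟩ := f.flat.exists_nsmul_eq_of_finite_quotient b
    have hd0 : d ≠ 0 := by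
      rintro rfl
      refine smul_ne_zero (Int.natCast_ne_zero.2 hn) hb ?_
      rw [natCast_zsmul, ← hd, map_zero]
    obtain ⟨l, hl⟩ := T₁.nondeg' d hd0
    refine ⟨l, fun h0 => hl ?_⟩
    rw [← midPairing_flat f hf.2.1, hd, map_nsmul, h0, nsmul_zero]

noncomputable def freePart (hf : IsIsogeny f) : TorusHom T₁ (f.midTorus hf) where
  sharp := LinearMap.id
  flat := f.flat
  compat a b := (f.midPairing_flat hf.2.1 a b).symm

noncomputable def dilationPart (hf : IsIsogeny f) : TorusHom (f.midTorus hf) T₂ where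
  sharp := f.sharp
  flat := LinearMap.id
  compat a b := have := hf.2.2.2; f.midPairing_sharp hf.2.1 a b

theorem isFreeIsogeny_freePart (hf : IsIsogeny f) : IsFreeIsogeny (f.freePart hf) :=
  ⟨⟨Function.injective_id, hf.2.1, finite_quotient_range_id, hf.2.2.2⟩, Function.bijective_id⟩

theorem isDilation_dilationPart (hf : IsIsogeny f) : IsDilation (f.dilationPart hf) :=
  ⟨⟨hf.1, Function.injective_id, hf.2.2.1, finite_quotient_range_id⟩, Function.bijective_id⟩

theorem dilationPart_comp_freePart (hf : IsIsogeny f) :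
    (f.dilationPart hf).comp (f.freePart hf) = f :=
  ext (LinearMap.id_comp _) (LinearMap.id_comp _)

section Uniqueness

variable {P : IntegralTorus} {h' : TorusHom T₁ P} {g' : TorusHom P T₂}

theorem pair_eq_midPairing (hf : IsIsogeny f) (hh' : IsFreeIsogeny h') (hcomp : g'.comp h' = f)
    (c : P.Λ) (b : P.Λ') : P.pair c b = f.midPairing hf.2.1 (h'.sharp c) (g'.flat b) := by
  have := hh'.1.2.2.2
  refine LinearMap.congr_fun (h'.flat.ext_of_comp_eq_of_finite_quotient
    (E := P.pair c) (E' := f.midPairing hf.2.1 (h'.sharp c) ∘ₗ g'.flat) ?_) b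
  ext d
  have hflat : g'.flat (h'.flat d) = f.flat d := congrArg (fun φ => φ.flat d) hcomp
  simp only [LinearMap.comp_apply, ← h'.compat, hflat, midPairing_flat]

noncomputable def isoToMid (hf : IsIsogeny f) (hh' : IsFreeIsogeny h') (hcomp : g'.comp h' = f) :
    TorusHom P (f.midTorus hf) where
  sharp := (LinearEquiv.ofBijective h'.sharp hh'.2).symm.toLinearMap
  flat := g'.flat
  compat a b := by
    let e := LinearEquiv.ofBijective h'.sharp hh'.2
    have := f.pair_eq_midPairing hf hh' hcomp (e.symm a) b
    rwa [show h'.sharp (e.symm a) = a from e.apply_symm_apply a] at this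

theorem existsUnique_isTorusIso_of_comp_eq (hf : IsIsogeny f) (hh' : IsFreeIsogeny h')
    (hg' : IsDilation g') (hcomp : g'.comp h' = f) :
    ∃! φ : TorusHom P (f.midTorus hf), IsTorusIso φ ∧ φ.comp h' = f.freePart hf ∧
      (f.dilationPart hf).comp φ = g' := by
  let e := LinearEquiv.ofBijective h'.sharp hh'.2
  refine ⟨f.isoToMid hf hh' hcomp, ⟨⟨e.symm.bijective, hg'.2⟩, ?_, ?_⟩, ?_⟩
  · exact ext (LinearMap.ext e.apply_symm_apply)
      (congrArg TorusHom.flat hcomp : g'.flat ∘ₗ h'.flat = f.flat)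
  · refine ext (LinearMap.ext fun a => ?_) (LinearMap.id_comp _)
    exact e.symm_apply_eq.2 (congrArg (fun φ => φ.sharp a) hcomp).symm
  · rintro ψ ⟨-, hψh', hψg'⟩
    refine ext (LinearMap.ext fun a => e.eq_symm_apply.2 ?_) ?_
    · exact congrArg (fun φ => φ.sharp a) hψh'
    · exact (congrArg TorusHom.flat hψg' : LinearMap.id ∘ₗ ψ.flat = g'.flat)

end Uniqueness

end TorusHom

/-- Every isogeny of integral tori factors as a free isogeny followed by a dilation, and
the factorization is unique up to a unique isomorphism of the middle torus. -/
theorem stmt12 (T₁ T₂ : IntegralTorus) (f : TorusHom T₁ T₂) (hf : IsIsogeny f) :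
    ∃ (T₃ : IntegralTorus) (h : TorusHom T₁ T₃) (g : TorusHom T₃ T₂),
      IsFreeIsogeny h ∧ IsDilation g ∧ TorusHom.comp g h = f ∧
      ∀ (P : IntegralTorus) (h' : TorusHom T₁ P) (g' : TorusHom P T₂),
        IsFreeIsogeny h' → IsDilation g' → TorusHom.comp g' h' = f →
        ∃! φ : TorusHom P T₃,
          IsTorusIso φ ∧ TorusHom.comp φ h' = h ∧ TorusHom.comp g φ = g' :=
  ⟨f.midTorus hf, f.freePart hf, f.dilationPart hf, f.isFreeIsogeny_freePart hf,
    f.isDilation_dilationPart hf, f.dilationPart_comp_freePart hf,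
    fun _ _ _ hh' hg' hcomp => f.existsUnique_isTorusIso_of_comp_eq hf hh' hg' hcomp⟩
end

section
/- Let Σ = (Λ, Λ', [·,·]) be an integral torus with a polarization ξ of type (a₁,…,a_g) and let A = a_g. Then there exists an integral torus Σ^pp = (Λ, Λ', [·,·]^pp) with a principal polarization ζ and a dilation f : Σ^pp → Σ such that f*ξ = A·ζ. -/
/-- A polarization on an integral torus: a homomorphism `ξ : Λ' → Λ` such that
`(x, y) ↦ [ξ(x), y]` is symmetric and positive definite. -/
def IsPolarization (T : IntegralTorus) (ξ : T.Λ' →ₗ[ℤ] T.Λ) : Prop :=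
  (∀ x y : T.Λ', T.pair (ξ x) y = T.pair (ξ y) x) ∧
    ∀ x : T.Λ', x ≠ 0 → 0 < T.pair (ξ x) x

/-!
In the Smith bases `ξ` is diagonal with entries `aᵢ`, all of which divide `A`, so
`g : eᵢ ↦ (A / aᵢ) • e'ᵢ` satisfies `ξ ∘ g = A` and `g ∘ ξ = A`. Let `ζ : e'ᵢ ↦ eᵢ` and
`[l, l']^pp = A⁻¹ [ξ ζ⁻¹ l, l']`, so that `[ζ x, y]^pp = A⁻¹ [ξ x, y]` and `ζ` inherits symmetry
and positivity from `ξ`; positivity along `ζ` also gives both nondegeneracies of `pp`.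
The dilation is `f^# = ζ ∘ g`, `f_# = id`: compatibility of the pairings is `ξ ∘ g = A`, which
also makes `f^#` injective, hence of finite cokernel, and `f^# ∘ ξ = ζ ∘ g ∘ ξ = A • ζ`.
-/

theorem dvd_last_of_dvd_succ {α : Type*} [Monoid α] {n : ℕ} {a : Fin (n + 1) → α}
    (h : ∀ i : Fin n, a i.castSucc ∣ a i.succ) (i : Fin (n + 1)) : a i ∣ a (Fin.last n) := by
  rcases (Fin.le_last i).lt_or_eq with hi | rfl
  · exact (Fin.liftFun_iff_succ (· ∣ ·)).2 h hi
  · exact dvd_rfl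

section Lattice

variable {ι M N : Type*} [AddCommGroup M] [AddCommGroup N]

theorem Module.Basis.exists_comp_eq_smul_id_of_apply_eq_smul (e : Module.Basis ι ℤ M)
    (e' : Module.Basis ι ℤ N) {ξ : N →ₗ[ℤ] M} {a : ι → ℤ} (hξ : ∀ i, ξ (e' i) = a i • e i)
    {A : ℤ} (hA : ∀ i, a i ∣ A) :
    ∃ g : M →ₗ[ℤ] N, ξ ∘ₗ g = A • LinearMap.id ∧ g ∘ₗ ξ = A • LinearMap.id := by
  refine ⟨e.constr ℤ fun i => (A / a i) • e' i, e.ext fun i => ?_, e'.ext fun i => ?_⟩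
  · simp only [LinearMap.comp_apply, e.constr_basis, map_zsmul, hξ, smul_smul,
      Int.ediv_mul_cancel (hA i), LinearMap.smul_apply, LinearMap.id_apply]
  · simp only [LinearMap.comp_apply, hξ, map_zsmul, e.constr_basis, smul_smul,
      Int.mul_ediv_cancel' (hA i), LinearMap.smul_apply, LinearMap.id_apply]

theorem LinearMap.injective_of_comp_eq_smul_id [Module.IsTorsionFree ℤ M] {g : M →ₗ[ℤ] N}
    {ξ : N →ₗ[ℤ] M} {A : ℤ} (hA : A ≠ 0) (h : ξ ∘ₗ g = A • LinearMap.id) :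
    Function.Injective g := by
  refine Function.Injective.of_comp (f := ξ) ?_
  rw [← LinearMap.coe_comp, h]
  exact smul_right_injective M hA

theorem LinearMap.finite_quotient_range_of_injective [Module.Free ℤ M] [Module.Finite ℤ M]
    {f : M →ₗ[ℤ] M} (hf : Function.Injective f) : Finite (M ⧸ LinearMap.range f) :=
  Submodule.finiteQuotientOfFreeOfRankEq _ (LinearMap.finrank_range_of_inj hf)

end Lattice

section Pairing

variable {M N : Type*} [AddCommGroup M] [AddCommGroup N]

theorem exists_apply_ne_zero_left_of_pos {P : M →ₗ[ℤ] N →ₗ[ℤ] ℝ} {ζ : N ≃ₗ[ℤ] M}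
    (hpos : ∀ x, x ≠ 0 → 0 < P (ζ x) x) {l : M} (hl : l ≠ 0) : ∃ l', P l l' ≠ 0 :=
  ⟨ζ.symm l, by simpa using (hpos (ζ.symm l) (by simpa using hl)).ne'⟩

theorem exists_apply_ne_zero_right_of_pos {P : M →ₗ[ℤ] N →ₗ[ℤ] ℝ} {ζ : N ≃ₗ[ℤ] M}
    (hpos : ∀ x, x ≠ 0 → 0 < P (ζ x) x) {l' : N} (hl' : l' ≠ 0) : ∃ l, P l l' ≠ 0 :=
  ⟨ζ l', (hpos l' hl').ne'⟩

noncomputable def rescaledPairing (B : M →ₗ[ℤ] N →ₗ[ℤ] ℝ) (ξ : N →ₗ[ℤ] M) (ζ : N ≃ₗ[ℤ] M)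
    (A : ℤ) : M →ₗ[ℤ] N →ₗ[ℤ] ℝ :=
  (A : ℝ)⁻¹ • B ∘ₗ ξ ∘ₗ ζ.symm.toLinearMap

variable (B : M →ₗ[ℤ] N →ₗ[ℤ] ℝ) (ξ : N →ₗ[ℤ] M) (ζ : N ≃ₗ[ℤ] M) {A : ℤ}

theorem rescaledPairing_apply (l : M) (l' : N) :
    rescaledPairing B ξ ζ A l l' = (A : ℝ)⁻¹ * B (ξ (ζ.symm l)) l' :=
  rfl

theorem rescaledPairing_apply_equiv (x y : N) :
    rescaledPairing B ξ ζ A (ζ x) y = (A : ℝ)⁻¹ * B (ξ x) y := by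
  rw [rescaledPairing_apply, LinearEquiv.symm_apply_apply]

theorem rescaledPairing_apply_equiv_comm (hsymm : ∀ x y, B (ξ x) y = B (ξ y) x) (x y : N) :
    rescaledPairing B ξ ζ A (ζ x) y = rescaledPairing B ξ ζ A (ζ y) x := by
  rw [rescaledPairing_apply_equiv, rescaledPairing_apply_equiv, hsymm]

theorem rescaledPairing_apply_equiv_pos (hA : 0 < A)
    (hpos : ∀ x, x ≠ 0 → 0 < B (ξ x) x) : ∀ x, x ≠ 0 → 0 < rescaledPairing B ξ ζ A (ζ x) x := by
  intro x hx
  rw [rescaledPairing_apply_equiv]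
  exact mul_pos (inv_pos.mpr (Int.cast_pos.mpr hA)) (hpos x hx)

theorem rescaledPairing_apply_equiv_comp (hA : A ≠ 0) {g : M →ₗ[ℤ] N}
    (hg : ξ ∘ₗ g = A • LinearMap.id) (l : M) (l' : N) :
    rescaledPairing B ξ ζ A (ζ (g l)) l' = B l l' := by
  rw [rescaledPairing_apply_equiv, ← LinearMap.comp_apply ξ g, hg, LinearMap.smul_apply,
    LinearMap.id_apply, map_zsmul, LinearMap.smul_apply, zsmul_eq_mul, ← mul_assoc,
    inv_mul_cancel₀ (Int.cast_ne_zero.mpr hA), one_mul]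

end Pairing

/-- Let `Σ = (Λ, Λ', [·,·])` be an integral torus with a polarization `ξ` of type
`(a₁, …, a_g)` (exhibited by Smith normal form bases `e, e'` with `ξ(e'ᵢ) = aᵢ • eᵢ` and
`aᵢ ∣ aᵢ₊₁`), and let `A = a_g`.  Then there is an integral torus
`Σ^pp = (Λ, Λ', [·,·]^pp)` (same lattices, new nondegenerate pairing `pp`) carrying a
principal polarization `ζ` together with a dilation `f : Σ^pp → Σ` such that the induced
polarization satisfies `f*ξ = f^# ∘ ξ ∘ f_# = A • ζ`. -/
theorem stmt15 (T : IntegralTorus) (n : ℕ)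
    (e : Module.Basis (Fin (n + 1)) ℤ T.Λ) (e' : Module.Basis (Fin (n + 1)) ℤ T.Λ')
    (ξ : T.Λ' →ₗ[ℤ] T.Λ) (hξpol : IsPolarization T ξ)
    (a : Fin (n + 1) → ℤ) (ha : ∀ i, 0 < a i)
    (hdvd : ∀ i : Fin n, a i.castSucc ∣ a i.succ)
    (hsnf : ∀ i, ξ (e' i) = a i • e i) :
    ∃ (pp : T.Λ →ₗ[ℤ] T.Λ' →ₗ[ℤ] ℝ) (ζ : T.Λ' →ₗ[ℤ] T.Λ)
      (fs : T.Λ →ₗ[ℤ] T.Λ) (ff : T.Λ' →ₗ[ℤ] T.Λ'),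
      -- `pp` is a nondegenerate pairing, so `(Λ, Λ', pp)` is an integral torus `Σ^pp`
      (∀ l : T.Λ, l ≠ 0 → ∃ l', pp l l' ≠ 0) ∧
      (∀ l' : T.Λ', l' ≠ 0 → ∃ l, pp l l' ≠ 0) ∧
      -- `ζ` is a principal polarization on `Σ^pp`
      (∀ x y : T.Λ', pp (ζ x) y = pp (ζ y) x) ∧
      (∀ x : T.Λ', x ≠ 0 → 0 < pp (ζ x) x) ∧
      Function.Bijective ζ ∧
      -- `f = (fs, ff)` is a homomorphism `Σ^pp → Σ` which is a dilation
      (∀ (l : T.Λ) (l' : T.Λ'), pp (fs l) l' = T.pair l (ff l')) ∧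
      Function.Injective fs ∧ Function.Bijective ff ∧
      Finite (T.Λ ⧸ LinearMap.range fs) ∧
      -- the induced polarization `f*ξ` equals `A • ζ`
      (∀ x : T.Λ', fs (ξ (ff x)) = a (Fin.last n) • ζ x) := by
  obtain ⟨g, hξg, hgξ⟩ :=
    e.exists_comp_eq_smul_id_of_apply_eq_smul e' hsnf (dvd_last_of_dvd_succ hdvd)
  have hA := ha (Fin.last n)
  let ζ := e'.equiv e (Equiv.refl _)
  have hpos := rescaledPairing_apply_equiv_pos T.pair ξ ζ hA hξpol.2
  have hinj : Function.Injective (ζ.toLinearMap ∘ₗ g) :=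
    ζ.injective.comp (LinearMap.injective_of_comp_eq_smul_id hA.ne' hξg)
  refine ⟨rescaledPairing T.pair ξ ζ (a (Fin.last n)), ζ, ζ.toLinearMap ∘ₗ g, LinearMap.id,
    fun l hl => exists_apply_ne_zero_left_of_pos hpos hl,
    fun l' hl' => exists_apply_ne_zero_right_of_pos hpos hl',
    rescaledPairing_apply_equiv_comm T.pair ξ ζ hξpol.1, hpos, ζ.bijective,
    rescaledPairing_apply_equiv_comp T.pair ξ ζ hA.ne' hξg, hinj, Function.bijective_id,
    LinearMap.finite_quotient_range_of_injective hinj, fun x => ?_⟩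
  simp only [LinearMap.comp_apply, LinearMap.id_apply, LinearEquiv.coe_coe]
  rw [← LinearMap.comp_apply g ξ, hgξ, LinearMap.smul_apply, LinearMap.id_apply, map_zsmul]
end
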